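/- Let ω(x) = tanh(x/√2) and let f : ℝ → ℝ be continuous and bounded with ∫_ℝ f(x) ω'(x) dx = 0. Define ξ̃(x) = ω'(x) ∫_0^x (ω'(s))^{−2} ( ∫_{−∞}^s f(τ) ω'(τ) dτ ) ds. Then ∫_ℝ ξ̃(x) ω(x) (ω'(x))² dx = −(√2/6) ∫_ℝ f(x) ω'(x) ω(x) dx (in particular, all integrals involved converge absolutely). -/

import Mathlib

/-!
Since `(ω')' = -√2 ω ω'`, we have `ω (ω')³ = -(√2/6) ((ω')³)'`. Writing `ξ̃ = ω' h` with
`h' = F / (ω')²` and `F(s) = ∫_{-∞}^s f ω'`, two integrations by parts give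
`∫ ξ̃ ω (ω')² = ∫ h ω (ω')³ = (√2/6) ∫ ω' F = -(√2/6) ∫ f ω' ω`.
Integrability and the vanishing of the boundary terms come from `|F| ≤ M (1 - ω²) = √2 M ω'`
(orthogonality makes `F` small at `+∞` as well as at `-∞`), which in turn gives `|ξ̃| ≤ 2M`.
-/

open Real MeasureTheory

noncomputable def ω (x : ℝ) : ℝ := Real.tanh (x / Real.sqrt 2)

noncomputable def xiTilde (f : ℝ → ℝ) (x : ℝ) : ℝ :=
  deriv ω x *
    ∫ s in (0 : ℝ)..x, ((deriv ω s) ^ 2)⁻¹ * ∫ τ in Set.Iic s, f τ * deriv ω τ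

open Filter Set Topology

namespace Real

theorem hasDerivAt_tanh (y : ℝ) : HasDerivAt tanh (1 - tanh y ^ 2) y := by
  have h := (hasDerivAt_sinh y).div (hasDerivAt_cosh y) (cosh_pos y).ne'
  rw [show sinh / cosh = tanh from funext fun x => (tanh_eq_sinh_div_cosh x).symm] at h
  refine h.congr_deriv ?_
  rw [tanh_eq_sinh_div_cosh, div_pow, one_sub_div (by positivity)]
  ring

theorem tendsto_tanh_atTop : Tendsto tanh atTop (𝓝 1) := by
  have hexp : Tendsto (fun y => exp (-(2 * y))) atTop (𝓝 0) :=
    tendsto_exp_atBot.comp (tendsto_neg_atTop_atBot.comp (tendsto_id.const_mul_atTop two_pos))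
  have key : ∀ y, tanh y = (1 - exp (-(2 * y))) / (1 + exp (-(2 * y))) := fun y => by
    have h : exp y * exp (-y) = 1 := by rw [← exp_add, add_neg_cancel, exp_zero]
    rw [tanh_eq, show -(2 * y) = -y + -y by ring, exp_add, div_eq_div_iff (by positivity)
      (by positivity)]
    linear_combination 2 * exp (-y) * h
  have h := ((tendsto_const_nhds (x := (1 : ℝ))).sub hexp).div
    ((tendsto_const_nhds (x := (1 : ℝ))).add hexp) (by norm_num)
  simpa [funext key, Pi.div_def] using h

theorem tendsto_tanh_atBot : Tendsto tanh atBot (𝓝 (-1)) := by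
  have h := tendsto_tanh_atTop.neg.comp tendsto_neg_atBot_atTop
  simpa [Function.comp_def] using h

end Real

noncomputable def ω' (x : ℝ) : ℝ := (1 - ω x ^ 2) / √2

theorem ω_zero : ω 0 = 0 := by simp [ω]

theorem abs_ω_lt_one (x : ℝ) : |ω x| < 1 := abs_tanh_lt_one _

theorem hasDerivAt_ω (x : ℝ) : HasDerivAt ω (ω' x) x := by
  refine ((hasDerivAt_tanh (x / √2)).comp x ((hasDerivAt_id x).div_const √2)).congr_deriv ?_
  simp [ω', ω, div_eq_mul_inv]

theorem deriv_ω : deriv ω = ω' := funext fun x => (hasDerivAt_ω x).deriv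

theorem continuous_ω : Continuous ω :=
  continuous_iff_continuousAt.2 fun x => (hasDerivAt_ω x).continuousAt

theorem continuous_ω' : Continuous ω' :=
  (continuous_const.sub (continuous_ω.pow 2)).div_const _

theorem one_sub_ω_sq (x : ℝ) : 1 - ω x ^ 2 = √2 * ω' x := by
  rw [ω', mul_div_cancel₀ _ (by positivity)]

theorem ω'_pos (x : ℝ) : 0 < ω' x := by
  have := (sq_lt_one_iff_abs_lt_one _).2 (abs_ω_lt_one x)
  exact div_pos (by linarith) (by positivity)

theorem ω'_le_one (x : ℝ) : ω' x ≤ 1 := by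
  have : 1 ≤ √2 := by rw [one_le_sqrt]; norm_num
  rw [ω', div_le_one (by positivity)]
  nlinarith [sq_nonneg (ω x)]

theorem hasDerivAt_ω' (x : ℝ) : HasDerivAt ω' (-(√2 * ω x * ω' x)) x := by
  refine ((((hasDerivAt_ω x).pow 2).const_sub 1).div_const √2).congr_deriv ?_
  rw [div_eq_iff (by positivity)]
  push_cast
  linear_combination ω x * ω' x * mul_self_sqrt zero_le_two

theorem tendsto_ω_atTop : Tendsto ω atTop (𝓝 1) :=
  tendsto_tanh_atTop.comp (tendsto_id.atTop_div_const (by positivity))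

theorem tendsto_ω_atBot : Tendsto ω atBot (𝓝 (-1)) :=
  tendsto_tanh_atBot.comp (tendsto_id.atBot_div_const (by positivity))

theorem integrableOn_Ioi_ω' (a : ℝ) : IntegrableOn ω' (Ioi a) :=
  integrableOn_Ioi_deriv_of_nonneg' (fun x _ => hasDerivAt_ω x) (fun x _ => (ω'_pos x).le)
    tendsto_ω_atTop

theorem integral_Ioi_ω' (a : ℝ) : ∫ x in Ioi a, ω' x = 1 - ω a :=
  integral_Ioi_of_hasDerivAt_of_tendsto' (fun x _ => hasDerivAt_ω x) (integrableOn_Ioi_ω' a)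
    tendsto_ω_atTop

theorem integrable_ω' : Integrable ω' := by
  refine (aecover_Ioi (l := atBot) tendsto_id).integrable_of_integral_bounded_of_nonneg_ae 2
    integrableOn_Ioi_ω' (ae_of_all _ fun x => (ω'_pos x).le) (Eventually.of_forall fun a => ?_)
  rw [id, integral_Ioi_ω']
  linarith [abs_lt.1 (abs_ω_lt_one a)]

theorem integral_Iic_ω' (a : ℝ) : ∫ x in Iic a, ω' x = ω a + 1 := by
  rw [integral_Iic_of_hasDerivAt_of_tendsto' (fun x _ => hasDerivAt_ω x) integrable_ω'.integrableOn
    tendsto_ω_atBot, sub_neg_eq_add]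

theorem hasDerivAt_ω_div_ω' (x : ℝ) :
    HasDerivAt (fun x => ω x / ω' x) ((1 + ω x ^ 2) / (√2 * ω' x)) x := by
  refine ((hasDerivAt_ω x).div (hasDerivAt_ω' x) (ω'_pos x).ne').congr_deriv ?_
  rw [div_eq_div_iff (by positivity [ω'_pos x]) (by positivity [ω'_pos x])]
  linear_combination (-ω' x ^ 2) * one_sub_ω_sq x + ω x ^ 2 * ω' x ^ 2 * mul_self_sqrt zero_le_two

theorem abs_sub_le_abs_sub_of_abs_deriv_le {g g' φ φ' : ℝ → ℝ}
    (hg : ∀ x, HasDerivAt g (g' x) x) (hφ : ∀ x, HasDerivAt φ (φ' x) x)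
    (hle : ∀ x, |g' x| ≤ φ' x) (a x : ℝ) : |g x - g a| ≤ |φ x - φ a| := by
  have hsub : Monotone (φ - g) := monotone_of_hasDerivAt_nonneg (fun x => (hφ x).sub (hg x))
    fun x => sub_nonneg.2 ((le_abs_self _).trans (hle x))
  have hadd : Monotone (φ + g) := monotone_of_hasDerivAt_nonneg (fun x => (hφ x).add (hg x))
    fun x => neg_le_iff_add_nonneg'.1 ((neg_le_neg (hle x)).trans (neg_abs_le _))
  rcases le_total a x with hax | hxa
  · have h₁ := hsub hax
    have h₂ := hadd hax
    simp only [Pi.sub_apply, Pi.add_apply] at h₁ h₂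
    rw [abs_le]
    constructor <;> linarith [le_abs_self (φ x - φ a)]
  · have h₁ := hsub hxa
    have h₂ := hadd hxa
    simp only [Pi.sub_apply, Pi.add_apply] at h₁ h₂
    rw [abs_le]
    constructor <;> linarith [neg_abs_le (φ x - φ a)]

section PartialProjection

variable {f : ℝ → ℝ} {M : ℝ}

noncomputable def partialProj (f : ℝ → ℝ) (s : ℝ) : ℝ := ∫ τ in Iic s, f τ * ω' τ

theorem integrable_mul_ω' (hf : AEStronglyMeasurable f) (hM : ∀ x, |f x| ≤ M) :
    Integrable fun x => f x * ω' x :=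
  integrable_ω'.bdd_mul hf (ae_of_all _ hM)

theorem abs_setIntegral_mul_ω'_le (hM : ∀ x, |f x| ≤ M) (S : Set ℝ) :
    |∫ x in S, f x * ω' x| ≤ M * ∫ x in S, ω' x := by
  rw [← integral_const_mul, ← norm_eq_abs]
  refine norm_integral_le_of_norm_le (integrable_ω'.const_mul M).integrableOn
    (ae_of_all _ fun x => ?_)
  rw [norm_eq_abs, abs_mul, abs_of_pos (ω'_pos x)]
  exact mul_le_mul_of_nonneg_right (hM x) (ω'_pos x).le

theorem abs_partialProj_le (hf : AEStronglyMeasurable f) (hM : ∀ x, |f x| ≤ M)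
    (horth : ∫ x, f x * ω' x = 0) (s : ℝ) : |partialProj f s| ≤ √2 * M * ω' s := by
  have hleft : |partialProj f s| ≤ M * (ω s + 1) := by
    simpa only [partialProj, integral_Iic_ω'] using abs_setIntegral_mul_ω'_le hM (Iic s)
  have hright : |partialProj f s| ≤ M * (1 - ω s) := by
    have hsplit := integral_add_compl (measurableSet_Iic (a := s)) (integrable_mul_ω' hf hM)
    rw [compl_Iic, horth, add_eq_zero_iff_eq_neg] at hsplit
    rw [partialProj, hsplit, abs_neg]
    simpa only [integral_Ioi_ω'] using abs_setIntegral_mul_ω'_le hM (Ioi s)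
  obtain ⟨hlo, hhi⟩ := abs_lt.1 (abs_ω_lt_one s)
  rw [mul_assoc, mul_left_comm, ← one_sub_ω_sq]
  -- average the two bounds with weights (1 - ω s) / 2 and (1 + ω s) / 2
  nlinarith [mul_le_mul_of_nonneg_left hleft (by linarith : 0 ≤ 1 - ω s),
    mul_le_mul_of_nonneg_left hright (by linarith : 0 ≤ 1 + ω s)]

theorem hasDerivAt_partialProj (hf : Continuous f) (hM : ∀ x, |f x| ≤ M) (s : ℝ) :
    HasDerivAt (partialProj f) (f s * ω' s) s := by
  have hint := integrable_mul_ω' hf.aestronglyMeasurable hM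
  have hcont : Continuous fun x => f x * ω' x := hf.mul continuous_ω'
  have hshift : partialProj f = fun s => partialProj f 0 + ∫ t in (0 : ℝ)..s, f t * ω' t := by
    funext s
    rw [← intervalIntegral.integral_Iic_sub_Iic hint.integrableOn hint.integrableOn, partialProj,
      partialProj, add_sub_cancel]
  rw [hshift]
  exact (intervalIntegral.integral_hasDerivAt_right (hcont.intervalIntegrable _ _)
    (hcont.stronglyMeasurableAtFilter _ _) hcont.continuousAt).const_add _

theorem continuous_partialProj (hf : Continuous f) (hM : ∀ x, |f x| ≤ M) :
    Continuous (partialProj f) :=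
  continuous_iff_continuousAt.2 fun s => (hasDerivAt_partialProj hf hM s).continuousAt

theorem integrable_partialProj (hf : Continuous f) (hM : ∀ x, |f x| ≤ M)
    (horth : ∫ x, f x * ω' x = 0) : Integrable (partialProj f) :=
  (integrable_ω'.const_mul (√2 * M)).mono' (continuous_partialProj hf hM).aestronglyMeasurable
    (ae_of_all _ (abs_partialProj_le hf.aestronglyMeasurable hM horth))

theorem integrable_ω'_mul_partialProj (hf : Continuous f) (hM : ∀ x, |f x| ≤ M)
    (horth : ∫ x, f x * ω' x = 0) : Integrable fun x => ω' x * partialProj f x :=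
  (integrable_partialProj hf hM horth).bdd_mul continuous_ω'.aestronglyMeasurable
    (ae_of_all _ fun x => by rw [norm_eq_abs, abs_of_pos (ω'_pos x)]; exact ω'_le_one x)

theorem integral_ω'_mul_partialProj (hf : Continuous f) (hM : ∀ x, |f x| ≤ M)
    (horth : ∫ x, f x * ω' x = 0) :
    ∫ x, ω' x * partialProj f x = -∫ x, f x * ω' x * ω x := by
  have hω : ∀ᵐ x, ‖ω x‖ ≤ 1 := ae_of_all _ fun x => (abs_ω_lt_one x).le
  have hibp := integral_mul_deriv_eq_deriv_mul_of_integrable (u := ω) (v := partialProj f)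
    (fun x _ => hasDerivAt_ω x) (fun x _ => hasDerivAt_partialProj hf hM x)
    ((integrable_mul_ω' hf.aestronglyMeasurable hM).bdd_mul continuous_ω.aestronglyMeasurable hω)
    (integrable_ω'_mul_partialProj hf hM horth)
    ((integrable_partialProj hf hM horth).bdd_mul continuous_ω.aestronglyMeasurable hω)
  rw [← neg_eq_iff_eq_neg.2 hibp]
  simp_rw [mul_comm (ω _)]

theorem integrable_mul_ω'_mul_ω (hf : AEStronglyMeasurable f) (hM : ∀ x, |f x| ≤ M) :
    Integrable fun x => f x * ω' x * ω x :=
  (integrable_mul_ω' hf hM).mul_bdd continuous_ω.aestronglyMeasurable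
    (ae_of_all _ fun x => (abs_ω_lt_one x).le)

end PartialProjection

section XiTilde

variable {f : ℝ → ℝ} {M : ℝ}

noncomputable def xiTildeCoeff (f : ℝ → ℝ) (x : ℝ) : ℝ :=
  ∫ s in (0 : ℝ)..x, (ω' s ^ 2)⁻¹ * partialProj f s

theorem xiTilde_eq_mul (f : ℝ → ℝ) (x : ℝ) : xiTilde f x = ω' x * xiTildeCoeff f x := by
  rw [xiTilde, deriv_ω]; rfl

theorem hasDerivAt_xiTildeCoeff (hf : Continuous f) (hM : ∀ x, |f x| ≤ M) (x : ℝ) :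
    HasDerivAt (xiTildeCoeff f) ((ω' x ^ 2)⁻¹ * partialProj f x) x := by
  have hcont : Continuous fun s => (ω' s ^ 2)⁻¹ * partialProj f s :=
    ((continuous_ω'.pow 2).inv₀ fun s => (pow_pos (ω'_pos s) 2).ne').mul
      (continuous_partialProj hf hM)
  exact intervalIntegral.integral_hasDerivAt_right (hcont.intervalIntegrable _ _)
    (hcont.stronglyMeasurableAtFilter _ _) hcont.continuousAt

theorem abs_xiTildeCoeff_le (hf : Continuous f) (hM : ∀ x, |f x| ≤ M)
    (horth : ∫ x, f x * ω' x = 0) (x : ℝ) : |xiTildeCoeff f x| ≤ 2 * M / ω' x := by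
  have hM₀ : 0 ≤ M := (abs_nonneg _).trans (hM 0)
  have hω' := ω'_pos
  -- compare with `2 M ω / ω'`, whose derivative `√2 M (1 + ω²) / ω'` dominates `√2 M / ω'`
  have hcmp := abs_sub_le_abs_sub_of_abs_deriv_le (hasDerivAt_xiTildeCoeff hf hM)
    (fun x => (hasDerivAt_ω_div_ω' x).const_mul (2 * M)) (fun s => ?_) 0 x
  · have h0 : xiTildeCoeff f 0 = 0 := intervalIntegral.integral_same
    simp only [h0, ω_zero, zero_div, mul_zero, sub_zero] at hcmp
    calc |xiTildeCoeff f x| ≤ |2 * M * (ω x / ω' x)| := hcmp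
      _ = 2 * M * |ω x| / ω' x := by
        rw [abs_mul, abs_div, abs_of_nonneg (by positivity), abs_of_pos (hω' x)]
        ring
      _ ≤ 2 * M / ω' x := div_le_div_of_nonneg_right
        (mul_le_of_le_one_right (by positivity) (abs_ω_lt_one x).le) (hω' x).le
  · rw [abs_mul, abs_inv, abs_of_pos (pow_pos (hω' s) 2), inv_mul_le_iff₀ (pow_pos (hω' s) 2)]
    calc |partialProj f s| ≤ √2 * M * ω' s := abs_partialProj_le hf.aestronglyMeasurable hM horth s
      _ ≤ √2 * M * ω' s * (1 + ω s ^ 2) :=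
        le_mul_of_one_le_right (by positivity [hω' s]) (by nlinarith [sq_nonneg (ω s)])
      _ = ω' s ^ 2 * (2 * M * ((1 + ω s ^ 2) / (√2 * ω' s))) := by
        field_simp
        linear_combination M * ω' s * mul_self_sqrt zero_le_two

theorem abs_xiTilde_le (hf : Continuous f) (hM : ∀ x, |f x| ≤ M)
    (horth : ∫ x, f x * ω' x = 0) (x : ℝ) : |xiTilde f x| ≤ 2 * M := by
  rw [xiTilde_eq_mul, abs_mul, abs_of_pos (ω'_pos x), ← le_div_iff₀' (ω'_pos x)]
  exact abs_xiTildeCoeff_le hf hM horth x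

theorem continuous_xiTilde (hf : Continuous f) (hM : ∀ x, |f x| ≤ M) : Continuous (xiTilde f) :=
  (funext (xiTilde_eq_mul f)) ▸ continuous_ω'.mul
    (continuous_iff_continuousAt.2 fun x => (hasDerivAt_xiTildeCoeff hf hM x).continuousAt)

theorem integrable_xiTilde_mul_ω_mul_ω'_sq (hf : Continuous f) (hM : ∀ x, |f x| ≤ M)
    (horth : ∫ x, f x * ω' x = 0) :
    Integrable fun x => xiTilde f x * ω x * ω' x ^ 2 := by
  have hM₀ : 0 ≤ 2 * M := by linarith [(abs_nonneg _).trans (hM 0)]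
  have hbdd : ∀ x, ‖xiTilde f x * ω x * ω' x‖ ≤ 2 * M := fun x => by
    rw [norm_eq_abs, abs_mul, abs_mul, abs_of_pos (ω'_pos x)]
    simpa using mul_le_mul (mul_le_mul (abs_xiTilde_le hf hM horth x) (abs_ω_lt_one x).le
      (abs_nonneg _) hM₀) (ω'_le_one x) (ω'_pos x).le (by linarith)
  refine (integrable_ω'.mul_bdd (((continuous_xiTilde hf hM).mul continuous_ω).mul
    continuous_ω').aestronglyMeasurable (ae_of_all _ hbdd)).congr (ae_of_all _ fun x => ?_)
  simp only [Pi.mul_apply]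
  ring

theorem integral_xiTilde_mul_ω_mul_ω'_sq (hf : Continuous f) (hM : ∀ x, |f x| ≤ M)
    (horth : ∫ x, f x * ω' x = 0) :
    ∫ x, xiTilde f x * ω x * ω' x ^ 2 = √2 / 6 * ∫ x, ω' x * partialProj f x := by
  have hv (x : ℝ) : HasDerivAt (fun x => ω' x ^ 3) (-(3 * √2) * (ω x * ω' x ^ 3)) x :=
    ((hasDerivAt_ω' x).pow 3).congr_deriv (by push_cast; ring)
  have huv' : (fun x => xiTildeCoeff f x * (-(3 * √2) * (ω x * ω' x ^ 3))) =
      fun x => -(3 * √2) * (xiTilde f x * ω x * ω' x ^ 2) := by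
    funext x; rw [xiTilde_eq_mul]; ring
  have hu'v : (fun x => (ω' x ^ 2)⁻¹ * partialProj f x * ω' x ^ 3) =
      fun x => ω' x * partialProj f x := by
    funext x; field_simp [(ω'_pos x).ne']
  have huv : (fun x => xiTildeCoeff f x * ω' x ^ 3) = fun x => ω' x * (ω' x * xiTilde f x) := by
    funext x; rw [xiTilde_eq_mul]; ring
  have hbdd : ∀ᵐ x, ‖ω' x * xiTilde f x‖ ≤ 2 * M := ae_of_all _ fun x => by
    rw [norm_eq_abs, abs_mul, abs_of_pos (ω'_pos x)]
    exact (mul_le_of_le_one_left (abs_nonneg _) (ω'_le_one x)).trans (abs_xiTilde_le hf hM horth x)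
  have hint : Integrable fun x => ω' x * (ω' x * xiTilde f x) :=
    integrable_ω'.mul_bdd (continuous_ω'.mul (continuous_xiTilde hf hM)).aestronglyMeasurable hbdd
  have hibp := integral_mul_deriv_eq_deriv_mul_of_integrable (u := xiTildeCoeff f)
    (v := fun x => ω' x ^ 3) (fun x _ => hasDerivAt_xiTildeCoeff hf hM x) (fun x _ => hv x)
    (by rw [Pi.mul_def, huv']; exact (integrable_xiTilde_mul_ω_mul_ω'_sq hf hM horth).const_mul _)
    (by rw [Pi.mul_def, hu'v]; exact integrable_ω'_mul_partialProj hf hM horth)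
    (by rw [Pi.mul_def, huv]; exact hint)
  rw [huv', hu'v, integral_const_mul] at hibp
  linear_combination (-√2 / 6) * hibp - (1 / 2) * (∫ x, xiTilde f x * ω x * ω' x ^ 2) *
    mul_self_sqrt zero_le_two

end XiTilde

/-- The key integration-by-parts identity for the projection of the error onto `ω'`:
if `f` is continuous, bounded, and orthogonal to `ω'`, then
`∫ ξ̃ ω (ω')² = −(√2/6) ∫ f ω' ω`, all integrals converging absolutely. -/
theorem xiTilde_projection_identity (f : ℝ → ℝ) (hf : Continuous f)
    (hfb : ∃ M : ℝ, ∀ x : ℝ, |f x| ≤ M)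
    (horth : (∫ x : ℝ, f x * deriv ω x) = 0) :
    Integrable (fun x : ℝ => f x * deriv ω x) volume ∧
    Integrable (fun x : ℝ => f x * deriv ω x * ω x) volume ∧
    Integrable (fun x : ℝ => xiTilde f x * ω x * (deriv ω x) ^ 2) volume ∧
    (∫ x : ℝ, xiTilde f x * ω x * (deriv ω x) ^ 2)
      = -(Real.sqrt 2 / 6) * ∫ x : ℝ, f x * deriv ω x * ω x := by
  obtain ⟨M, hM⟩ := hfb
  rw [deriv_ω] at horth ⊢
  refine ⟨integrable_mul_ω' hf.aestronglyMeasurable hM,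
    integrable_mul_ω'_mul_ω hf.aestronglyMeasurable hM,
    integrable_xiTilde_mul_ω_mul_ω'_sq hf hM horth, ?_⟩
  rw [integral_xiTilde_mul_ω_mul_ω'_sq hf hM horth, integral_ω'_mul_partialProj hf hM horth]
  ring
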